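/- For every n ≥ 3 with n ≠ 4, BH_n has a restricted 3-vertex cut of cardinality 12n − 24; in particular κ^3(BH_n) ≤ 12n − 24. -/
import Mathlib


open SimpleGraph

/-- `bhSigma u` is 1 if the inner index `u 0` is 0 or 2, and 3 (= -1) otherwise. -/
def bhSigma {n : ℕ} [NeZero n] (u : Fin n → ZMod 4) : ZMod 4 :=
  if u 0 = 0 ∨ u 0 = 2 then 1 else 3

/-- The adjacency relation underlying the balanced hypercube `BH n`. -/
def bhRel {n : ℕ} [NeZero n] (u v : Fin n → ZMod 4) : Prop :=
  ∃ ε : ZMod 4, (ε = 1 ∨ ε = 3) ∧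
    ((v 0 = u 0 + ε ∧ ∀ i : Fin n, i ≠ 0 → v i = u i) ∨
     (∃ i : Fin n, 1 ≤ (i : ℕ) ∧ v 0 = u 0 + ε ∧ v i = u i + bhSigma u ∧
        ∀ j : Fin n, j ≠ 0 → j ≠ i → v j = u j))

/-- The `n`-dimensional balanced hypercube. -/
def BH (n : ℕ) [NeZero n] : SimpleGraph (Fin n → ZMod 4) :=
  SimpleGraph.fromRel bhRel

/-- `F` is a restricted `h`-vertex cut of `G`: deleting `F` disconnects `G`,
and every vertex of the remaining graph has at least `h` neighbours there
(equivalently, every connected component has minimum degree at least `h`). -/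
def IsRestrictedCut {V : Type*} (G : SimpleGraph V) (h : ℕ) (F : Set V) : Prop :=
  ¬ (G.induce Fᶜ).Connected ∧
    ∀ v : ↥Fᶜ, h ≤ ((G.induce Fᶜ).neighborSet v).ncard

/-- `F` is a `g`-vertex cut of `G`: deleting `F` disconnects `G`, and every
connected component of the remaining graph has at least `g + 1` vertices. -/
def IsGVertexCut {V : Type*} (G : SimpleGraph V) (g : ℕ) (F : Set V) : Prop :=
  ¬ (G.induce Fᶜ).Connected ∧
    ∀ C : (G.induce Fᶜ).ConnectedComponent, g + 1 ≤ C.supp.ncard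

/-- The vertex neighbourhood of a set `S`: vertices outside `S` adjacent to some vertex of `S`. -/
def setNbhd {V : Type*} (G : SimpleGraph V) (S : Set V) : Set V :=
  {v | v ∉ S ∧ ∃ u ∈ S, G.Adj v u}

/-- The vertex of `BH n` with first three coordinates `a, b, c` and all others `0`. -/
def tVertex (n : ℕ) (a b c : ZMod 4) : Fin n → ZMod 4 :=
  fun j => if (j : ℕ) = 0 then a else if (j : ℕ) = 1 then b else
    if (j : ℕ) = 2 then c else 0

/-- The distinguished 12-vertex set `T` in `BH n` (`n ≥ 3`). -/
def Tset (n : ℕ) : Set (Fin n → ZMod 4) :=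
  {tVertex n 0 0 0, tVertex n 2 0 0, tVertex n 1 0 0, tVertex n 3 0 0,
   tVertex n 0 3 0, tVertex n 2 3 0, tVertex n 1 0 1, tVertex n 3 0 1,
   tVertex n 0 3 1, tVertex n 2 3 1, tVertex n 1 3 1, tVertex n 3 3 1}

/-- The last coordinate `u (n-1)` of a vertex of `BH n`. -/
def lastCoord (n : ℕ) [NeZero n] (u : Fin n → ZMod 4) : ZMod 4 :=
  u ⟨n - 1, Nat.sub_lt (Nat.pos_of_ne_zero (NeZero.ne n)) Nat.one_pos⟩

namespace BHaux

abbrev Trip := ZMod 4 × ZMod 4 × ZMod 4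

def sg (a : ZMod 4) : ZMod 4 := if a = 0 ∨ a = 2 then 1 else 3

variable {n : ℕ} [NeZero n]

lemma bhSigma_eq (u : Fin n → ZMod 4) : bhSigma u = sg (u 0) := rfl

/-- the `k % n`-th index -/
def fi (n : ℕ) [NeZero n] (k : ℕ) : Fin n :=
  ⟨k % n, Nat.mod_lt _ (Nat.pos_of_ne_zero (NeZero.ne n))⟩

lemma fi_val (k : ℕ) (h : k < n) : (fi n k : ℕ) = k := Nat.mod_eq_of_lt h

lemma sg_add_sg (a ε : ZMod 4) (hε : ε = 1 ∨ ε = 3) : sg (a + ε) + sg a = 0 := by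
  rcases hε with h | h <;> subst h <;> revert a <;> decide

lemma bhRel_symm {u v : Fin n → ZMod 4} (h : bhRel u v) : bhRel v u := by
  obtain ⟨ε, hε, h⟩ := h
  have hε' : (0 : ZMod 4) - ε = 1 ∨ (0 : ZMod 4) - ε = 3 := by
    rcases hε with h' | h' <;> subst h' <;> decide
  rcases h with ⟨h0, hoff⟩ | ⟨i, hi1, h0, hi, hoff⟩
  · exact ⟨0 - ε, hε', Or.inl ⟨by rw [h0]; ring, fun i hi => (hoff i hi).symm⟩⟩
  · refine ⟨0 - ε, hε', Or.inr ⟨i, hi1, by rw [h0]; ring, ?_, fun j h1 h2 => (hoff j h1 h2).symm⟩⟩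
    have hsg : sg (v 0) + sg (u 0) = 0 := by
      rw [h0]; exact sg_add_sg (u 0) ε hε
    rw [bhSigma_eq, hi, bhSigma_eq]
    have : sg (v 0) = 0 - sg (u 0) := by linear_combination hsg
    rw [this]; ring

lemma bhRel_ne {u v : Fin n → ZMod 4} (h : bhRel u v) : u ≠ v := by
  obtain ⟨ε, hε, h⟩ := h
  have h0 : v 0 = u 0 + ε := by rcases h with ⟨h0, _⟩ | ⟨i, _, h0, _⟩ <;> exact h0
  intro he
  subst he
  rcases hε with h' | h' <;> subst h' <;>
    exact absurd h0 (by revert h0; generalize u 0 = a; revert a; decide)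

lemma adj_iff {u v : Fin n → ZMod 4} : (BH n).Adj u v ↔ bhRel u v := by
  constructor
  · rintro ⟨hne, h | h⟩
    · exact h
    · exact bhRel_symm h
  · intro h
    exact ⟨bhRel_ne h, Or.inl h⟩

/-- triple of the first three coordinates -/
def enc (v : Fin n → ZMod 4) : Trip := (v 0, v (fi n 1), v (fi n 2))

def tailZero (v : Fin n → ZMod 4) : Prop := ∀ j : Fin n, 3 ≤ (j : ℕ) → v j = 0

lemma fi1_ne_zero (hn : 3 ≤ n) : fi n 1 ≠ 0 := by
  intro h
  have := congrArg Fin.val h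
  rw [fi_val 1 (by omega)] at this
  simp at this

lemma fi2_ne_zero (hn : 3 ≤ n) : fi n 2 ≠ 0 := by
  intro h
  have := congrArg Fin.val h
  rw [fi_val 2 (by omega)] at this
  simp at this

lemma fi1_ne_fi2 (hn : 3 ≤ n) : fi n 1 ≠ fi n 2 := by
  intro h
  have := congrArg Fin.val h
  rw [fi_val 1 (by omega), fi_val 2 (by omega)] at this
  omega

lemma eq_fi_of_val {j : Fin n} {k : ℕ} (hk : k < n) (h : (j : ℕ) = k) : j = fi n k := by
  ext; rw [fi_val k hk]; exact h

lemma eq_zero_of_val {j : Fin n} (h : (j : ℕ) = 0) : j = 0 := by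
  ext; simpa using h

/-- case analysis helper on coordinates -/
lemma coord_cases (hn : 3 ≤ n) (j : Fin n) :
    j = 0 ∨ j = fi n 1 ∨ j = fi n 2 ∨ 3 ≤ (j : ℕ) := by
  rcases Nat.lt_or_ge (j : ℕ) 3 with h | h
  · interval_cases hj : (j : ℕ)
    · exact Or.inl (eq_zero_of_val hj)
    · exact Or.inr (Or.inl (eq_fi_of_val (by omega) hj))
    · exact Or.inr (Or.inr (Or.inl (eq_fi_of_val (by omega) hj)))
  · exact Or.inr (Or.inr (Or.inr h))

def mv0 (v : Fin n → ZMod 4) (ε : ZMod 4) : Fin n → ZMod 4 :=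
  Function.update v 0 (v 0 + ε)

def mvi (v : Fin n → ZMod 4) (ε : ZMod 4) (i : Fin n) : Fin n → ZMod 4 :=
  Function.update (Function.update v 0 (v 0 + ε)) i (v i + bhSigma v)

variable {v u : Fin n → ZMod 4} {ε : ZMod 4} {i j : Fin n}

lemma mv0_zero : mv0 v ε 0 = v 0 + ε := Function.update_self _ _ _

lemma mv0_apply (h : j ≠ 0) : mv0 v ε j = v j := Function.update_of_ne h _ _

lemma mvi_self : mvi v ε i i = v i + bhSigma v := Function.update_self _ _ _

lemma mvi_zero (hi : i ≠ 0) : mvi v ε i 0 = v 0 + ε := by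
  rw [mvi, Function.update_of_ne (Ne.symm hi), Function.update_self]

lemma mvi_apply (h : j ≠ 0) (h2 : j ≠ i) : mvi v ε i j = v j := by
  rw [mvi, Function.update_of_ne h2, Function.update_of_ne h]

lemma coords_except (hn : 3 ≤ n) (e : Fin n)
    (h1 : fi n 1 ≠ e → v (fi n 1) = u (fi n 1))
    (h2 : fi n 2 ≠ e → v (fi n 2) = u (fi n 2))
    (ht : ∀ j : Fin n, 3 ≤ (j : ℕ) → j ≠ e → v j = u j) :
    ∀ j : Fin n, j ≠ 0 → j ≠ e → v j = u j := by
  intro j hj0 hje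
  rcases coord_cases hn j with h | h | h | h
  · exact absurd h hj0
  · subst h; exact h1 hje
  · subst h; exact h2 hje
  · exact ht j h hje

lemma one_le_of_ne_zero (hi : i ≠ 0) : 1 ≤ (i : ℕ) := by
  have : (i : ℕ) ≠ 0 := fun h => hi (eq_zero_of_val h)
  omega

lemma bhRel_mv0 (hε : ε = 1 ∨ ε = 3) : bhRel v (mv0 v ε) :=
  ⟨ε, hε, Or.inl ⟨mv0_zero, fun _ hi => mv0_apply hi⟩⟩

lemma bhRel_mvi (hε : ε = 1 ∨ ε = 3) (hi : i ≠ 0) : bhRel v (mvi v ε i) :=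
  ⟨ε, hε, Or.inr ⟨i, one_le_of_ne_zero hi, mvi_zero hi, mvi_self,
    fun _ h1 h2 => mvi_apply h1 h2⟩⟩

def Ttrips : Finset Trip :=
  {(0,0,0),(2,0,0),(1,0,0),(3,0,0),(0,3,0),(2,3,0),
   (1,0,1),(3,0,1),(0,3,1),(2,3,1),(1,3,1),(3,3,1)}

def F0trips : Finset Trip :=
  {(0,0,1),(0,0,3),(0,2,1),(1,1,0),(1,3,0),(1,3,2),
   (2,0,1),(2,0,3),(2,2,1),(3,1,0),(3,3,0),(3,3,2)}

def nbt (p : Trip) : Finset Trip :=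
  {(p.1+1,p.2.1,p.2.2),(p.1+3,p.2.1,p.2.2),
   (p.1+1,p.2.1+sg p.1,p.2.2),(p.1+3,p.2.1+sg p.1,p.2.2),
   (p.1+1,p.2.1,p.2.2+sg p.1),(p.1+3,p.2.1,p.2.2+sg p.1)}

abbrev pat (a b c s : ZMod 4) : Prop :=
  (s = 1 ∧ (a = 1 ∨ a = 3) ∧ ((b = 0 ∧ c = 0) ∨ (b = 3 ∧ c = 0) ∨ (b = 3 ∧ c = 1))) ∨
  (s = 3 ∧ (a = 0 ∨ a = 2) ∧ ((b = 0 ∧ c = 0) ∨ (b = 0 ∧ c = 1) ∨ (b = 3 ∧ c = 1)))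

lemma tVertex_zero {a b c : ZMod 4} : tVertex n a b c 0 = a := by
  simp [tVertex]

lemma tVertex_fi1 (hn : 3 ≤ n) {a b c : ZMod 4} : tVertex n a b c (fi n 1) = b := by
  have h := fi_val (n := n) 1 (by omega)
  simp [tVertex, h]

lemma tVertex_fi2 (hn : 3 ≤ n) {a b c : ZMod 4} : tVertex n a b c (fi n 2) = c := by
  have h := fi_val (n := n) 2 (by omega)
  simp [tVertex, h]

lemma tailZero_tVertex {a b c : ZMod 4} : tailZero (tVertex n a b c) := by
  intro j hj
  have h1 : (j : ℕ) ≠ 0 := by omega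
  have h2 : (j : ℕ) ≠ 1 := by omega
  have h3 : (j : ℕ) ≠ 2 := by omega
  simp [tVertex, h1, h2, h3]

lemma enc_tVertex (hn : 3 ≤ n) {a b c : ZMod 4} : enc (tVertex n a b c) = (a, b, c) := by
  simp [enc, tVertex_zero, tVertex_fi1 hn, tVertex_fi2 hn]

lemma eq_tVertex (hn : 3 ≤ n) (h : tailZero v) :
    v = tVertex n (v 0) (v (fi n 1)) (v (fi n 2)) := by
  funext j
  rcases coord_cases hn j with hj | hj | hj | hj
  · subst hj; rw [tVertex_zero]
  · subst hj; rw [tVertex_fi1 hn]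
  · subst hj; rw [tVertex_fi2 hn]
  · rw [h j hj, tailZero_tVertex j hj]

lemma mem_Tset_iff (hn : 3 ≤ n) : v ∈ Tset n ↔ tailZero v ∧ enc v ∈ Ttrips := by
  constructor
  · intro h
    have hv : ∃ a b c : ZMod 4, ((a,b,c) ∈ Ttrips) ∧ v = tVertex n a b c := by
      simp only [Tset, Set.mem_insert_iff, Set.mem_singleton_iff] at h
      rcases h with h|h|h|h|h|h|h|h|h|h|h|h <;> subst h <;>
        refine ⟨_,_,_, ?_, rfl⟩ <;> decide
    obtain ⟨a,b,c,hm,rfl⟩ := hv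
    exact ⟨tailZero_tVertex, by rw [enc_tVertex hn]; exact hm⟩
  · rintro ⟨ht, hm⟩
    rw [eq_tVertex hn ht]
    simp only [enc, Ttrips, Finset.mem_insert, Finset.mem_singleton, Prod.mk.injEq] at hm
    rcases hm with h|h|h|h|h|h|h|h|h|h|h|h <;>
      rw [h.1, h.2.1, h.2.2] <;> simp [Tset]

lemma tVertex_mem_Tset (hn : 3 ≤ n) {a b c : ZMod 4} (h : (a,b,c) ∈ Ttrips) :
    tVertex n a b c ∈ Tset n := by
  rw [mem_Tset_iff hn]
  exact ⟨tailZero_tVertex, by rw [enc_tVertex hn]; exact h⟩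

lemma adj_of_trip (hn : 3 ≤ n) (hu : tailZero u) (hv : tailZero v)
    (h : enc v ∈ nbt (enc u)) : (BH n).Adj u v := by
  rw [adj_iff]
  have htail : ∀ j : Fin n, 3 ≤ (j : ℕ) → j ≠ j → v j = u j := fun j h3 hj => absurd rfl hj
  have htail' : ∀ (e : Fin n), ∀ j : Fin n, 3 ≤ (j : ℕ) → j ≠ e → v j = u j :=
    fun e j h3 _ => by rw [hv j h3, hu j h3]
  simp only [nbt, enc, Finset.mem_insert, Finset.mem_singleton, Prod.mk.injEq] at h
  rcases h with ⟨h0,h1,h2⟩|⟨h0,h1,h2⟩|⟨h0,h1,h2⟩|⟨h0,h1,h2⟩|⟨h0,h1,h2⟩|⟨h0,h1,h2⟩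
  · exact ⟨1, Or.inl rfl, Or.inl ⟨h0, fun j hj =>
      coords_except hn 0 (fun _ => h1) (fun _ => h2) (htail' 0) j hj hj⟩⟩
  · exact ⟨3, Or.inr rfl, Or.inl ⟨h0, fun j hj =>
      coords_except hn 0 (fun _ => h1) (fun _ => h2) (htail' 0) j hj hj⟩⟩
  · exact ⟨1, Or.inl rfl, Or.inr ⟨fi n 1, one_le_of_ne_zero (fi1_ne_zero hn), h0,
      by rw [bhSigma_eq]; exact h1,
      coords_except hn (fi n 1) (fun hne => absurd rfl hne) (fun _ => h2) (htail' _)⟩⟩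
  · exact ⟨3, Or.inr rfl, Or.inr ⟨fi n 1, one_le_of_ne_zero (fi1_ne_zero hn), h0,
      by rw [bhSigma_eq]; exact h1,
      coords_except hn (fi n 1) (fun hne => absurd rfl hne) (fun _ => h2) (htail' _)⟩⟩
  · exact ⟨1, Or.inl rfl, Or.inr ⟨fi n 2, one_le_of_ne_zero (fi2_ne_zero hn), h0,
      by rw [bhSigma_eq]; exact h2,
      coords_except hn (fi n 2) (fun _ => h1) (fun hne => absurd rfl hne) (htail' _)⟩⟩
  · exact ⟨3, Or.inr rfl, Or.inr ⟨fi n 2, one_le_of_ne_zero (fi2_ne_zero hn), h0,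
      by rw [bhSigma_eq]; exact h2,
      coords_except hn (fi n 2) (fun _ => h1) (fun hne => absurd rfl hne) (htail' _)⟩⟩

lemma ne_zero_of_le3 (h3 : 3 ≤ (j : ℕ)) : j ≠ 0 := by
  intro h; subst h; simp at h3

lemma ne_zero_of_le1 (h1 : 1 ≤ (j : ℕ)) : j ≠ 0 := by
  intro h; subst h; simp at h1

lemma ne_fi1_of_le3 (hn : 3 ≤ n) (h3 : 3 ≤ (j : ℕ)) : j ≠ fi n 1 := by
  intro h
  have := congrArg Fin.val h
  rw [fi_val 1 (by omega)] at this
  omega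

lemma ne_fi2_of_le3 (hn : 3 ≤ n) (h3 : 3 ≤ (j : ℕ)) : j ≠ fi n 2 := by
  intro h
  have := congrArg Fin.val h
  rw [fi_val 2 (by omega)] at this
  omega

def FChar (v : Fin n → ZMod 4) : Prop :=
  (tailZero v ∧ enc v ∈ F0trips) ∨
  (∃ i : Fin n, 3 ≤ (i : ℕ) ∧ (∀ j : Fin n, 3 ≤ (j : ℕ) → j ≠ i → v j = 0) ∧
    pat (v 0) (v (fi n 1)) (v (fi n 2)) (v i))

set_option maxRecDepth 40000 in
set_option synthInstance.maxSize 4000 in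
set_option synthInstance.maxHeartbeats 2000000 in
lemma D1 : ∀ p ∈ Ttrips, ∀ q ∈ nbt p, q ∈ Ttrips ∨ q ∈ F0trips := by decide

set_option maxRecDepth 40000 in
set_option synthInstance.maxSize 4000 in
set_option synthInstance.maxHeartbeats 2000000 in
lemma D2 : ∀ p ∈ Ttrips, ∀ ε : ZMod 4, ε = 1 ∨ ε = 3 →
    pat (p.1 + ε) p.2.1 p.2.2 (sg p.1) := by decide

set_option maxRecDepth 40000 in
set_option synthInstance.maxSize 4000 in
set_option synthInstance.maxHeartbeats 2000000 in
lemma D3 : ∀ q ∈ F0trips, ∃ p ∈ Ttrips, q ∈ nbt p := by decide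

set_option maxRecDepth 40000 in
set_option synthInstance.maxSize 4000 in
set_option synthInstance.maxHeartbeats 2000000 in
lemma D4 : ∀ a b c s : ZMod 4, pat a b c s →
    ∃ a' : ZMod 4, (a', b, c) ∈ Ttrips ∧ sg a' = s ∧ (a = a' + 1 ∨ a = a' + 3) := by decide

set_option maxRecDepth 40000 in
set_option synthInstance.maxSize 4000 in
set_option synthInstance.maxHeartbeats 2000000 in
lemma D5 : ∀ q : Trip, q ∈ F0trips → q ∉ Ttrips := by decide

set_option maxRecDepth 40000 in
set_option synthInstance.maxSize 4000 in
set_option synthInstance.maxHeartbeats 2000000 in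
lemma pat_ne_zero : ∀ a b c : ZMod 4, ¬ pat a b c 0 := by decide

lemma mem_F_iff (hn : 3 ≤ n) :
    v ∈ setNbhd (BH n) (Tset n) ↔ FChar v := by
  constructor
  · rintro ⟨hvT, u, huT, hadj⟩
    have hrel : bhRel u v := bhRel_symm (adj_iff.mp hadj)
    obtain ⟨htu, hmu⟩ := (mem_Tset_iff hn).mp huT
    obtain ⟨ε, hε, hcase⟩ := hrel
    rcases hcase with ⟨h0, hoff⟩ | ⟨i, hi1, h0, hi, hoff⟩
    · have htv : tailZero v := fun j hj => by
        rw [hoff j (ne_zero_of_le3 hj), htu j hj]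
      have hm : enc v ∈ nbt (enc u) := by
        have e1 : v (fi n 1) = u (fi n 1) := hoff _ (fi1_ne_zero hn)
        have e2 : v (fi n 2) = u (fi n 2) := hoff _ (fi2_ne_zero hn)
        rcases hε with h|h <;> subst h <;> simp [nbt, enc, h0, e1, e2]
      rcases D1 _ hmu _ hm with ht | hf
      · exact absurd ((mem_Tset_iff hn).mpr ⟨htv, ht⟩) hvT
      · exact Or.inl ⟨htv, hf⟩
    · have hiz : i ≠ 0 := ne_zero_of_le1 hi1
      rcases coord_cases hn i with hc | hc | hc | hc
      · exact absurd hc hiz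
      · subst hc
        have htv : tailZero v := fun j hj => by
          rw [hoff j (ne_zero_of_le3 hj) (ne_fi1_of_le3 hn hj), htu j hj]
        have hm : enc v ∈ nbt (enc u) := by
          have e2 : v (fi n 2) = u (fi n 2) :=
            hoff _ (fi2_ne_zero hn) (Ne.symm (fi1_ne_fi2 hn))
          rw [bhSigma_eq] at hi
          rcases hε with h|h <;> subst h <;> simp [nbt, enc, h0, hi, e2]
        rcases D1 _ hmu _ hm with ht | hf
        · exact absurd ((mem_Tset_iff hn).mpr ⟨htv, ht⟩) hvT
        · exact Or.inl ⟨htv, hf⟩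
      · subst hc
        have htv : tailZero v := fun j hj => by
          rw [hoff j (ne_zero_of_le3 hj) (ne_fi2_of_le3 hn hj), htu j hj]
        have hm : enc v ∈ nbt (enc u) := by
          have e1 : v (fi n 1) = u (fi n 1) :=
            hoff _ (fi1_ne_zero hn) (fi1_ne_fi2 hn)
          rw [bhSigma_eq] at hi
          rcases hε with h|h <;> subst h <;> simp [nbt, enc, h0, hi, e1]
        rcases D1 _ hmu _ hm with ht | hf
        · exact absurd ((mem_Tset_iff hn).mpr ⟨htv, ht⟩) hvT
        · exact Or.inl ⟨htv, hf⟩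
      · refine Or.inr ⟨i, hc, ?_, ?_⟩
        · intro j hj hji
          rw [hoff j (ne_zero_of_le3 hj) hji, htu j hj]
        · have e1 : v (fi n 1) = u (fi n 1) :=
            hoff _ (fi1_ne_zero hn) (Ne.symm (ne_fi1_of_le3 hn hc))
          have e2 : v (fi n 2) = u (fi n 2) :=
            hoff _ (fi2_ne_zero hn) (Ne.symm (ne_fi2_of_le3 hn hc))
          have hvi : v i = sg (u 0) := by
            rw [hi, htu i hc, bhSigma_eq, zero_add]
          rw [h0, e1, e2, hvi]
          exact D2 _ hmu ε hε
  · rintro (⟨htv, hF0⟩ | ⟨i, hi3, hzero, hpat⟩)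
    · have hvT : v ∉ Tset n := by
        intro h
        exact D5 _ hF0 ((mem_Tset_iff hn).mp h).2
      obtain ⟨p, hp, hnb⟩ := D3 _ hF0
      refine ⟨hvT, tVertex n p.1 p.2.1 p.2.2, tVertex_mem_Tset hn (by simpa using hp), ?_⟩
      exact (adj_of_trip hn tailZero_tVertex htv (by rw [enc_tVertex hn]; simpa using hnb)).symm
    · have hvT : v ∉ Tset n := by
        intro h
        have htv := ((mem_Tset_iff hn).mp h).1
        rw [htv i hi3] at hpat
        exact pat_ne_zero _ _ _ hpat
      obtain ⟨a', hmem, hsg, hε⟩ := D4 _ _ _ _ hpat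
      have huT : tVertex n a' (v (fi n 1)) (v (fi n 2)) ∈ Tset n := tVertex_mem_Tset hn hmem
      have hoff : ∀ j : Fin n, j ≠ 0 → j ≠ i →
          v j = tVertex n a' (v (fi n 1)) (v (fi n 2)) j := by
        refine coords_except hn i (fun _ => (tVertex_fi1 hn).symm)
          (fun _ => (tVertex_fi2 hn).symm) ?_
        intro j hj hji
        rw [hzero j hj hji, tailZero_tVertex j hj]
      have hvi : v i = tVertex n a' (v (fi n 1)) (v (fi n 2)) i
          + bhSigma (tVertex n a' (v (fi n 1)) (v (fi n 2))) := by
        rw [bhSigma_eq, tVertex_zero, tailZero_tVertex i hi3, hsg, zero_add]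
      have hrel : bhRel (tVertex n a' (v (fi n 1)) (v (fi n 2))) v := by
        rcases hε with h|h
        · exact ⟨1, Or.inl rfl, Or.inr ⟨i, one_le_of_ne_zero (ne_zero_of_le3 hi3),
            by rw [tVertex_zero]; exact h, hvi, hoff⟩⟩
        · exact ⟨3, Or.inr rfl, Or.inr ⟨i, one_le_of_ne_zero (ne_zero_of_le3 hi3),
            by rw [tVertex_zero]; exact h, hvi, hoff⟩⟩
      exact ⟨hvT, _, huT, (adj_iff.mpr hrel).symm⟩

def pats : Finset (Trip × ZMod 4) :=
  {((1,0,0),1),((3,0,0),1),((1,3,0),1),((3,3,0),1),((1,3,1),1),((3,3,1),1),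
   ((0,0,0),3),((2,0,0),3),((0,0,1),3),((2,0,1),3),((0,3,1),3),((2,3,1),3)}

set_option maxRecDepth 40000 in
set_option synthInstance.maxSize 4000 in
set_option synthInstance.maxHeartbeats 2000000 in
lemma pat_iff_pats : ∀ a b c s : ZMod 4, pat a b c s ↔ ((a,b,c),s) ∈ pats := by decide

set_option maxRecDepth 40000 in
lemma pats_s : ∀ q ∈ pats, q.2 = 1 ∨ q.2 = 3 := by decide

def eV (n : ℕ) (p : Trip) (i : Fin n) (s : ZMod 4) : Fin n → ZMod 4 :=
  fun j => if (j : ℕ) = 0 then p.1 else if (j : ℕ) = 1 then p.2.1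
    else if (j : ℕ) = 2 then p.2.2 else if j = i then s else 0

variable {p : Trip} {s : ZMod 4}

lemma eV_zero : eV n p i s 0 = p.1 := by simp [eV]

lemma eV_fi1 (hn : 3 ≤ n) : eV n p i s (fi n 1) = p.2.1 := by
  have h := fi_val (n := n) 1 (by omega)
  simp [eV, h]

lemma eV_fi2 (hn : 3 ≤ n) : eV n p i s (fi n 2) = p.2.2 := by
  have h := fi_val (n := n) 2 (by omega)
  simp [eV, h]

lemma eV_self (hi3 : 3 ≤ (i : ℕ)) : eV n p i s i = s := by
  have h1 : (i : ℕ) ≠ 0 := by omega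
  have h2 : (i : ℕ) ≠ 1 := by omega
  have h3 : (i : ℕ) ≠ 2 := by omega
  simp [eV, h1, h2, h3]

lemma eV_tail (hj3 : 3 ≤ (j : ℕ)) (hji : j ≠ i) : eV n p i s j = 0 := by
  have h1 : (j : ℕ) ≠ 0 := by omega
  have h2 : (j : ℕ) ≠ 1 := by omega
  have h3 : (j : ℕ) ≠ 2 := by omega
  simp [eV, h1, h2, h3, hji]

def FS (n : ℕ) [NeZero n] : Finset (Fin n → ZMod 4) :=
  (F0trips.image fun p => tVertex n p.1 p.2.1 p.2.2) ∪
  (Finset.univ.filter fun i : Fin n => 3 ≤ (i : ℕ)).biUnion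
    (fun i => pats.image fun q => eV n q.1 i q.2)

lemma mem_FS_iff (hn : 3 ≤ n) : v ∈ FS n ↔ FChar v := by
  simp only [FS, Finset.mem_union, Finset.mem_image, Finset.mem_biUnion, Finset.mem_filter,
    Finset.mem_univ, true_and]
  constructor
  · rintro (⟨p, hp, rfl⟩ | ⟨i, hi3, q, hq, rfl⟩)
    · refine Or.inl ⟨tailZero_tVertex, ?_⟩
      rw [enc_tVertex hn]
      simpa using hp
    · refine Or.inr ⟨i, hi3, ?_, ?_⟩
      · intro j hj hji
        exact eV_tail hj hji
      · rw [eV_zero, eV_fi1 hn, eV_fi2 hn, eV_self hi3]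
        rw [pat_iff_pats]
        simpa using hq
  · rintro (⟨ht, h0⟩ | ⟨i, hi3, hz, hp⟩)
    · exact Or.inl ⟨enc v, h0, (eq_tVertex hn ht).symm⟩
    · refine Or.inr ⟨i, hi3, (enc v, v i), (pat_iff_pats _ _ _ _).mp hp, ?_⟩
      funext j
      rcases coord_cases hn j with hj | hj | hj | hj
      · subst hj; exact eV_zero
      · subst hj; exact eV_fi1 hn
      · subst hj; exact eV_fi2 hn
      · by_cases hji : j = i
        · subst hji; exact eV_self hj
        · rw [eV_tail hj hji, hz j hj hji]

lemma tVertex_inj (hn : 3 ≤ n) :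
    Function.Injective (fun p : Trip => tVertex n p.1 p.2.1 p.2.2) := by
  intro p q h
  have h0 := congrFun h 0
  have h1 := congrFun h (fi n 1)
  have h2 := congrFun h (fi n 2)
  simp only [tVertex_zero, tVertex_fi1 hn, tVertex_fi2 hn] at h0 h1 h2
  exact Prod.ext h0 (Prod.ext h1 h2)

lemma card_filter3 (hn : 3 ≤ n) :
    (Finset.univ.filter fun i : Fin n => 3 ≤ (i : ℕ)).card = n - 3 := by
  have key := Finset.card_filter_add_card_filter_not
    (s := (Finset.univ : Finset (Fin n))) (p := fun i : Fin n => 3 ≤ (i : ℕ))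
  have huniv : (Finset.univ : Finset (Fin n)).card = n := by
    rw [Finset.card_univ, Fintype.card_fin]
  have hneg : (Finset.univ.filter fun i : Fin n => ¬ 3 ≤ (i : ℕ)) = {0, fi n 1, fi n 2} := by
    ext j
    simp only [Finset.mem_filter, Finset.mem_univ, true_and, Finset.mem_insert,
      Finset.mem_singleton]
    constructor
    · intro hj
      rcases coord_cases hn j with h | h | h | h
      · exact Or.inl h
      · exact Or.inr (Or.inl h)
      · exact Or.inr (Or.inr h)
      · omega
    · rintro (rfl | rfl | rfl)
      · simp
      · rw [fi_val 1 (by omega)]; omega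
      · rw [fi_val 2 (by omega)]; omega
  have hcard3 : ({0, fi n 1, fi n 2} : Finset (Fin n)).card = 3 := by
    rw [Finset.card_insert_of_notMem, Finset.card_insert_of_notMem, Finset.card_singleton]
    · simp only [Finset.mem_singleton]
      exact fi1_ne_fi2 hn
    · simp only [Finset.mem_insert, Finset.mem_singleton]
      push_neg
      exact ⟨Ne.symm (fi1_ne_zero hn), Ne.symm (fi2_ne_zero hn)⟩
  rw [hneg, hcard3, huniv] at key
  omega

lemma FS_card (hn : 3 ≤ n) : (FS n).card = 12 * n - 24 := by
  have hc1 : (F0trips.image fun p => tVertex n p.1 p.2.1 p.2.2).card = 12 := by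
    rw [Finset.card_image_of_injective _ (tVertex_inj hn)]
    decide
  have hinner : ∀ i : Fin n, 3 ≤ (i : ℕ) →
      (pats.image fun q => eV n q.1 i q.2).card = 12 := by
    intro i hi3
    have hinj : Set.InjOn (fun q : Trip × ZMod 4 => eV n q.1 i q.2) pats := by
      intro q hq q' hq' h
      have h0 := congrFun h 0
      have h1 := congrFun h (fi n 1)
      have h2 := congrFun h (fi n 2)
      have hs := congrFun h i
      simp only [eV_zero, eV_fi1 hn, eV_fi2 hn, eV_self hi3] at h0 h1 h2 hs
      exact Prod.ext (Prod.ext h0 (Prod.ext h1 h2)) hs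
    rw [Finset.card_image_of_injOn hinj]
    decide
  have hdisj : ∀ i ∈ (Finset.univ.filter fun i : Fin n => 3 ≤ (i : ℕ)),
      ∀ i' ∈ (Finset.univ.filter fun i : Fin n => 3 ≤ (i : ℕ)), i ≠ i' →
      Disjoint (pats.image fun q => eV n q.1 i q.2)
        (pats.image fun q => eV n q.1 i' q.2) := by
    intro i hi i' hi' hne
    simp only [Finset.mem_filter, Finset.mem_univ, true_and] at hi hi'
    rw [Finset.disjoint_left]
    rintro x hx hx'
    simp only [Finset.mem_image] at hx hx'
    obtain ⟨q, hq, rfl⟩ := hx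
    obtain ⟨q', hq', he⟩ := hx'
    have := congrFun he i
    rw [eV_tail hi hne, eV_self hi] at this
    rcases pats_s q hq with h | h <;> rw [h] at this <;> exact absurd this (by decide)
  have hbicard : ((Finset.univ.filter fun i : Fin n => 3 ≤ (i : ℕ)).biUnion
      (fun i => pats.image fun q => eV n q.1 i q.2)).card = (n - 3) * 12 := by
    rw [Finset.card_biUnion hdisj]
    rw [Finset.sum_congr rfl (fun i hi => hinner i (by
      simp only [Finset.mem_filter, Finset.mem_univ, true_and] at hi; exact hi))]
    rw [Finset.sum_const, card_filter3 hn, smul_eq_mul]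
  have hdisj2 : Disjoint (F0trips.image fun p => tVertex n p.1 p.2.1 p.2.2)
      ((Finset.univ.filter fun i : Fin n => 3 ≤ (i : ℕ)).biUnion
        (fun i => pats.image fun q => eV n q.1 i q.2)) := by
    rw [Finset.disjoint_left]
    rintro x hx hx'
    simp only [Finset.mem_image, Finset.mem_biUnion, Finset.mem_filter, Finset.mem_univ,
      true_and] at hx hx'
    obtain ⟨p, hp, rfl⟩ := hx
    obtain ⟨i, hi3, q, hq, he⟩ := hx'
    have := congrFun he i
    rw [eV_self hi3, tailZero_tVertex i hi3] at this
    rcases pats_s q hq with h | h <;> rw [h] at this <;> exact absurd this (by decide)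
  rw [FS, Finset.card_union_of_disjoint hdisj2, hc1, hbicard]
  omega

set_option maxRecDepth 40000 in
set_option synthInstance.maxSize 4000 in
set_option synthInstance.maxHeartbeats 2000000 in
lemma Z1 : ∀ a : ZMod 4, a + 1 ≠ a + 3 := by decide

set_option maxRecDepth 40000 in
set_option synthInstance.maxSize 4000 in
set_option synthInstance.maxHeartbeats 2000000 in
lemma Z2 : ∀ a b : ZMod 4, b + sg a ≠ b := by decide

lemma sg_ne_zero : ∀ a : ZMod 4, sg a ≠ 0 := by decide

set_option maxRecDepth 40000 in
set_option synthInstance.maxSize 4000 in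
set_option synthInstance.maxHeartbeats 2000000 in
lemma ZFact1 : ∀ a s b c : ZMod 4, s + sg a = 0 → ¬ pat (a + 1) b c s := by decide

set_option maxRecDepth 40000 in
set_option synthInstance.maxSize 4000 in
set_option synthInstance.maxHeartbeats 2000000 in
lemma ZFact2 : ∀ a s b c : ZMod 4, s ≠ 0 → s + sg a ≠ 0 →
    ¬ pat (a + 1) b c (s + sg a) := by decide

set_option maxRecDepth 40000 in
set_option synthInstance.maxSize 4000 in
set_option synthInstance.maxHeartbeats 2000000 in
lemma ZFact3 : ∀ a b c ε : ZMod 4, (ε = 1 ∨ ε = 3) → (a,b,c) ∉ Ttrips →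
    ¬ pat (a + ε) b c (sg a) := by decide

set_option maxRecDepth 40000 in
set_option synthInstance.maxSize 4000 in
set_option synthInstance.maxHeartbeats 2000000 in
lemma D6 : ∀ p ∈ Ttrips, ∃ q1 ∈ nbt p, ∃ q2 ∈ nbt p, ∃ q3 ∈ nbt p,
    q1 ≠ q2 ∧ q1 ≠ q3 ∧ q2 ≠ q3 ∧ q1 ∈ Ttrips ∧ q2 ∈ Ttrips ∧ q3 ∈ Ttrips := by decide

set_option maxRecDepth 100000 in
set_option synthInstance.maxSize 4000 in
set_option synthInstance.maxHeartbeats 2000000 in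
lemma D7 : ∀ p : Trip, p ∉ Ttrips → p ∉ F0trips →
    ∃ q1 ∈ nbt p, ∃ q2 ∈ nbt p, ∃ q3 ∈ nbt p,
    q1 ≠ q2 ∧ q1 ≠ q3 ∧ q2 ≠ q3 ∧ q1 ∉ F0trips ∧ q2 ∉ F0trips ∧ q3 ∉ F0trips := by decide

lemma not_FChar_two {w : Fin n → ZMod 4} (hi : 3 ≤ (i : ℕ)) (hj : 3 ≤ (j : ℕ))
    (hij : i ≠ j) (h1 : w i ≠ 0) (h2 : w j ≠ 0) : ¬ FChar w := by
  rintro (⟨ht, _⟩ | ⟨k, hk3, hk0, hpat⟩)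
  · exact h1 (ht i hi)
  · by_cases hik : i = k
    · subst hik
      exact h2 (hk0 j hj (Ne.symm hij))
    · exact h1 (hk0 i hi hik)

lemma not_FChar_one {w : Fin n → ZMod 4} (hi : 3 ≤ (i : ℕ)) (hw : w i ≠ 0)
    (hz : ∀ j : Fin n, 3 ≤ (j : ℕ) → j ≠ i → w j = 0)
    (hp : ¬ pat (w 0) (w (fi n 1)) (w (fi n 2)) (w i)) : ¬ FChar w := by
  rintro (⟨ht, _⟩ | ⟨k, hk3, hk0, hpat⟩)
  · exact hw (ht i hi)
  · by_cases hik : i = k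
    · subst hik; exact hp hpat
    · exact hw (hk0 i hi hik)

lemma not_FChar_tz {w : Fin n → ZMod 4} (ht : tailZero w) (h0 : enc w ∉ F0trips) :
    ¬ FChar w := by
  rintro (⟨_, hf⟩ | ⟨k, hk3, _, hpat⟩)
  · exact h0 hf
  · rw [ht k hk3] at hpat
    exact pat_ne_zero _ _ _ hpat

lemma three_good (hn : 3 ≤ n) (hne : n ≠ 4) {v : Fin n → ZMod 4}
    (hv : v ∉ setNbhd (BH n) (Tset n)) :
    ∃ w1 w2 w3 : Fin n → ZMod 4, w1 ≠ w2 ∧ w1 ≠ w3 ∧ w2 ≠ w3 ∧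
      ((BH n).Adj v w1 ∧ w1 ∉ setNbhd (BH n) (Tset n)) ∧
      ((BH n).Adj v w2 ∧ w2 ∉ setNbhd (BH n) (Tset n)) ∧
      ((BH n).Adj v w3 ∧ w3 ∉ setNbhd (BH n) (Tset n)) := by
  by_cases hvT : v ∈ Tset n
  · -- v is in T : pick three neighbours inside T
    obtain ⟨htv, hm⟩ := (mem_Tset_iff hn).mp hvT
    obtain ⟨q1, hq1, q2, hq2, q3, hq3, h12, h13, h23, hT1, hT2, hT3⟩ := D6 _ hm
    refine ⟨tVertex n q1.1 q1.2.1 q1.2.2, tVertex n q2.1 q2.2.1 q2.2.2,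
      tVertex n q3.1 q3.2.1 q3.2.2, (tVertex_inj hn).ne h12, (tVertex_inj hn).ne h13,
      (tVertex_inj hn).ne h23, ?_, ?_, ?_⟩ <;>
    · constructor
      · refine adj_of_trip hn htv tailZero_tVertex ?_
        rw [enc_tVertex hn]
        first | exact hq1 | exact hq2 | exact hq3
      · intro hF
        exact hF.1 (tVertex_mem_Tset hn (by first | exact hT1 | exact hT2 | exact hT3))
  · have hF : ¬ FChar v := fun h => hv ((mem_F_iff hn).mpr h)
    by_cases hA : ∃ i j : Fin n, 3 ≤ (i : ℕ) ∧ 3 ≤ (j : ℕ) ∧ i ≠ j ∧ v i ≠ 0 ∧ v j ≠ 0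
    · -- at least two nonzero tail coordinates
      obtain ⟨i, j, hi3, hj3, hij, hvi, hvj⟩ := hA
      have hiz := ne_zero_of_le3 (j := i) hi3
      have hjz := ne_zero_of_le3 (j := j) hj3
      refine ⟨mv0 v 1, mv0 v 3, mvi v 1 (fi n 1), ?_, ?_, ?_, ?_, ?_, ?_⟩
      · intro h
        have := congrFun h 0
        rw [mv0_zero, mv0_zero] at this
        exact Z1 _ this
      · intro h
        have := congrFun h (fi n 1)
        rw [mv0_apply (fi1_ne_zero hn), mvi_self, bhSigma_eq] at this
        exact Z2 _ _ this.symm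
      · intro h
        have := congrFun h (fi n 1)
        rw [mv0_apply (fi1_ne_zero hn), mvi_self, bhSigma_eq] at this
        exact Z2 _ _ this.symm
      · refine ⟨adj_iff.mpr (bhRel_mv0 (Or.inl rfl)), fun hw => ?_⟩
        refine not_FChar_two hi3 hj3 hij ?_ ?_ ((mem_F_iff hn).mp hw) <;>
          rw [mv0_apply] <;> assumption
      · refine ⟨adj_iff.mpr (bhRel_mv0 (Or.inr rfl)), fun hw => ?_⟩
        refine not_FChar_two hi3 hj3 hij ?_ ?_ ((mem_F_iff hn).mp hw) <;>
          rw [mv0_apply] <;> assumption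
      · refine ⟨adj_iff.mpr (bhRel_mvi (Or.inl rfl) (fi1_ne_zero hn)), fun hw => ?_⟩
        refine not_FChar_two hi3 hj3 hij ?_ ?_ ((mem_F_iff hn).mp hw) <;>
          rw [mvi_apply] <;> first
            | assumption
            | exact ne_fi1_of_le3 hn (by assumption)
    · by_cases hB : ∃ i : Fin n, 3 ≤ (i : ℕ) ∧ v i ≠ 0
      · -- exactly one nonzero tail coordinate; here n ≥ 5
        obtain ⟨i, hi3, hvi⟩ := hB
        have hiz := ne_zero_of_le3 (j := i) hi3
        have hn5 : 5 ≤ n := by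
          have : (i : ℕ) < n := i.isLt
          omega
        have hz : ∀ j : Fin n, 3 ≤ (j : ℕ) → j ≠ i → v j = 0 := by
          intro j hj hji
          by_contra h
          exact hA ⟨i, j, hi3, hj, Ne.symm hji, hvi, h⟩
        obtain ⟨j, hj3, hji⟩ : ∃ j : Fin n, 3 ≤ (j : ℕ) ∧ j ≠ i := by
          by_cases h : (i : ℕ) = 3
          · refine ⟨fi n 4, by rw [fi_val 4 (by omega)]; omega, ?_⟩
            intro he
            have := congrArg Fin.val he
            rw [fi_val 4 (by omega)] at this
            omega
          · refine ⟨fi n 3, by rw [fi_val 3 (by omega)], ?_⟩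
            intro he
            have := congrArg Fin.val he
            rw [fi_val 3 (by omega)] at this
            omega
        have hjz := ne_zero_of_le3 (j := j) hj3
        have hij : i ≠ j := Ne.symm hji
        have hw1i : mvi v 1 j i = v i := mvi_apply hiz hij
        have hw2i : mvi v 3 j i = v i := mvi_apply hiz hij
        have hw1j : mvi v 1 j j = 0 + sg (v 0) := by
          rw [mvi_self, bhSigma_eq, hz j hj3 hji]
        have hw2j : mvi v 3 j j = 0 + sg (v 0) := by
          rw [mvi_self, bhSigma_eq, hz j hj3 hji]
        have hsgz : (0 : ZMod 4) + sg (v 0) ≠ 0 := by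
          rw [zero_add]; exact sg_ne_zero _
        have hg1 : (BH n).Adj v (mvi v 1 j) ∧ mvi v 1 j ∉ setNbhd (BH n) (Tset n) := by
          refine ⟨adj_iff.mpr (bhRel_mvi (Or.inl rfl) hjz), fun hw => ?_⟩
          refine not_FChar_two hi3 hj3 hij ?_ ?_ ((mem_F_iff hn).mp hw)
          · rw [hw1i]; exact hvi
          · rw [hw1j]; exact hsgz
        have hg2 : (BH n).Adj v (mvi v 3 j) ∧ mvi v 3 j ∉ setNbhd (BH n) (Tset n) := by
          refine ⟨adj_iff.mpr (bhRel_mvi (Or.inr rfl) hjz), fun hw => ?_⟩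
          refine not_FChar_two hi3 hj3 hij ?_ ?_ ((mem_F_iff hn).mp hw)
          · rw [hw2i]; exact hvi
          · rw [hw2j]; exact hsgz
        by_cases h0 : v i + sg (v 0) = 0
        · refine ⟨mvi v 1 j, mvi v 3 j, mv0 v 1, ?_, ?_, ?_, hg1, hg2, ?_⟩
          · intro h
            have := congrFun h 0
            rw [mvi_zero hjz, mvi_zero hjz] at this
            exact Z1 _ this
          · intro h
            have := congrFun h j
            rw [hw1j, mv0_apply hjz, hz j hj3 hji] at this
            exact hsgz this
          · intro h
            have := congrFun h j
            rw [hw2j, mv0_apply hjz, hz j hj3 hji] at this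
            exact hsgz this
          · refine ⟨adj_iff.mpr (bhRel_mv0 (Or.inl rfl)), fun hw => ?_⟩
            refine not_FChar_one hi3 ?_ ?_ ?_ ((mem_F_iff hn).mp hw)
            · rw [mv0_apply hiz]; exact hvi
            · intro k hk hki
              rw [mv0_apply (ne_zero_of_le3 hk)]
              exact hz k hk hki
            · rw [mv0_zero, mv0_apply (fi1_ne_zero hn), mv0_apply (fi2_ne_zero hn),
                mv0_apply hiz]
              exact ZFact1 (v 0) (v i) _ _ h0
        · refine ⟨mvi v 1 j, mvi v 3 j, mvi v 1 i, ?_, ?_, ?_, hg1, hg2, ?_⟩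
          · intro h
            have := congrFun h 0
            rw [mvi_zero hjz, mvi_zero hjz] at this
            exact Z1 _ this
          · intro h
            have := congrFun h j
            rw [hw1j, mvi_apply hjz hji] at this
            rw [hz j hj3 hji] at this
            exact hsgz this
          · intro h
            have := congrFun h j
            rw [hw2j, mvi_apply hjz hji] at this
            rw [hz j hj3 hji] at this
            exact hsgz this
          · refine ⟨adj_iff.mpr (bhRel_mvi (Or.inl rfl) hiz), fun hw => ?_⟩
            refine not_FChar_one hi3 ?_ ?_ ?_ ((mem_F_iff hn).mp hw)
            · rw [mvi_self, bhSigma_eq]; exact h0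
            · intro k hk hki
              rw [mvi_apply (ne_zero_of_le3 hk) hki]
              exact hz k hk hki
            · rw [mvi_zero hiz, mvi_apply (fi1_ne_zero hn) (Ne.symm (ne_fi1_of_le3 hn hi3)),
                mvi_apply (fi2_ne_zero hn) (Ne.symm (ne_fi2_of_le3 hn hi3)),
                mvi_self, bhSigma_eq]
              exact ZFact2 (v 0) (v i) _ _ hvi h0
      · -- tail is zero
        have ht : tailZero v := by
          intro j hj
          by_contra h
          exact hB ⟨j, hj, h⟩
        have hT' : enc v ∉ Ttrips := fun h => hvT ((mem_Tset_iff hn).mpr ⟨ht, h⟩)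
        have hF0' : enc v ∉ F0trips := fun h => hF (Or.inl ⟨ht, h⟩)
        obtain ⟨q1, hq1, q2, hq2, q3, hq3, h12, h13, h23, hf1, hf2, hf3⟩ :=
          D7 (enc v) hT' hF0'
        refine ⟨tVertex n q1.1 q1.2.1 q1.2.2, tVertex n q2.1 q2.2.1 q2.2.2,
          tVertex n q3.1 q3.2.1 q3.2.2, (tVertex_inj hn).ne h12, (tVertex_inj hn).ne h13,
          (tVertex_inj hn).ne h23, ?_, ?_, ?_⟩ <;>
        · constructor
          · refine adj_of_trip hn ht tailZero_tVertex ?_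
            rw [enc_tVertex hn]
            first | exact hq1 | exact hq2 | exact hq3
          · intro hw
            refine not_FChar_tz tailZero_tVertex ?_ ((mem_F_iff hn).mp hw)
            rw [enc_tVertex hn]
            first | exact hf1 | exact hf2 | exact hf3

lemma Fc_not_connected (hn : 3 ≤ n) :
    ¬ ((BH n).induce (setNbhd (BH n) (Tset n))ᶜ).Connected := by
  intro hconn
  have hxT : tVertex n 0 0 0 ∈ Tset n := tVertex_mem_Tset hn (by decide)
  have hxF : tVertex n 0 0 0 ∈ (setNbhd (BH n) (Tset n))ᶜ := fun h => h.1 hxT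
  have hyT : tVertex n 0 0 2 ∉ Tset n := by
    intro h
    have h2 := ((mem_Tset_iff hn).mp h).2
    rw [enc_tVertex hn] at h2
    exact absurd h2 (by decide)
  have hyF : tVertex n 0 0 2 ∈ (setNbhd (BH n) (Tset n))ᶜ := by
    intro h
    rcases (mem_F_iff hn).mp h with ⟨_, h0⟩ | ⟨i, hi3, _, hpat⟩
    · rw [enc_tVertex hn] at h0
      exact absurd h0 (by decide)
    · rw [tailZero_tVertex i hi3] at hpat
      exact pat_ne_zero _ _ _ hpat
  have key : ∀ (a b : ↥(setNbhd (BH n) (Tset n))ᶜ)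
      (_ : ((BH n).induce (setNbhd (BH n) (Tset n))ᶜ).Walk a b),
      ↑a ∈ Tset n → ↑b ∈ Tset n := by
    intro a b p
    induction p with
    | nil => exact id
    | @cons a c b h q ih =>
      intro ha
      apply ih
      by_contra hc
      have hadj : (BH n).Adj ↑a ↑c := h
      exact c.2 ⟨hc, ↑a, ha, hadj.symm⟩
  obtain ⟨p⟩ := hconn.preconnected ⟨tVertex n 0 0 0, hxF⟩ ⟨tVertex n 0 0 2, hyF⟩
  exact hyT (key _ _ p hxT)

end BHaux

theorem bh_restricted_three_upper_bound (n : ℕ) [NeZero n] (hn : 3 ≤ n) (hne : n ≠ 4) :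
    (∃ F : Set (Fin n → ZMod 4), IsRestrictedCut (BH n) 3 F ∧ F.ncard = 12 * n - 24) ∧
    sInf {m : ℕ | ∃ F : Set (Fin n → ZMod 4), IsRestrictedCut (BH n) 3 F ∧ F.ncard = m}
      ≤ 12 * n - 24 := by
  have hcut : IsRestrictedCut (BH n) 3 (setNbhd (BH n) (Tset n)) := by
    constructor
    · exact BHaux.Fc_not_connected hn
    · intro v
      obtain ⟨w1, w2, w3, h12, h13, h23, ⟨a1, f1⟩, ⟨a2, f2⟩, ⟨a3, f3⟩⟩ :=
        BHaux.three_good hn hne v.2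
      have hsub : ({⟨w1, f1⟩, ⟨w2, f2⟩, ⟨w3, f3⟩} :
          Set ↥(setNbhd (BH n) (Tset n))ᶜ) ⊆
          ((BH n).induce (setNbhd (BH n) (Tset n))ᶜ).neighborSet v := by
        rintro x (rfl | rfl | rfl)
        · exact a1
        · exact a2
        · exact a3
      have h3 : ({⟨w1, f1⟩, ⟨w2, f2⟩, ⟨w3, f3⟩} :
          Set ↥(setNbhd (BH n) (Tset n))ᶜ).ncard = 3 :=
        Set.ncard_eq_three.mpr ⟨_, _, _,
          fun h => h12 (congrArg Subtype.val h),
          fun h => h13 (congrArg Subtype.val h),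
          fun h => h23 (congrArg Subtype.val h), rfl⟩
      calc (3 : ℕ) = _ := h3.symm
        _ ≤ _ := Set.ncard_le_ncard hsub (Set.toFinite _)
  have hcard : (setNbhd (BH n) (Tset n)).ncard = 12 * n - 24 := by
    have he : setNbhd (BH n) (Tset n) = ↑(BHaux.FS n) := by
      ext v
      rw [Finset.mem_coe, BHaux.mem_FS_iff hn]
      exact BHaux.mem_F_iff hn
    rw [he, Set.ncard_coe_finset, BHaux.FS_card hn]
  exact ⟨⟨_, hcut, hcard⟩, Nat.sInf_le ⟨_, hcut, hcard⟩⟩
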